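/- Lemma 2.3(i), complex case: for every z ∈ ℂ with x := Re z > 0 and |Im z| ≤ x (i.e. |arg z| ≤ π/4), one has Re ξ(z) ≥ ξ(x). -/

import Mathlib

/-! On the right half-plane neither `1 + z²` nor `z / (1 + √(1+z²))` meets the branch cut
`(-∞, 0]`, so `ξ` is holomorphic there, with `ξ' = √(1+z²)/z`. On the vertical line through `x > 0`,
writing `z = x + it` and `√(1+z²) = u + iv` (so `u > 0`, `uv = xt`, `u² - v² = 1 + x² - t²`), the
derivative of `t ↦ Re ξ(x+it)` is `Re (i√(1+z²)/z) = t (u² - x²) / (u |z|²)`, and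
`(u² - x²)(u² + t²) = u²` gives `u² > x²`. So the derivative has the sign of `t`, and `Re ξ` is
minimal on the line at `t = 0`, where it is the real number `ξ(x)`. -/

noncomputable section

/-- `ξ(z) = (1+z²)^{1/2} + Log(z/(1+(1+z²)^{1/2}))` with principal branches. -/
def xi (z : ℂ) : ℂ :=
  (1 + z ^ 2) ^ ((1 : ℂ) / 2) + Complex.log (z / (1 + (1 + z ^ 2) ^ ((1 : ℂ) / 2)))

open Complex

lemma le_of_hasDerivAt_of_sub_mul_nonneg {f f' : ℝ → ℝ} {a : ℝ}
    (hf : ∀ t, HasDerivAt f (f' t) t) (hf' : ∀ t, 0 ≤ (t - a) * f' t) (b : ℝ) : f a ≤ f b := by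
  have hcont : Continuous f := continuous_iff_continuousAt.2 fun t => (hf t).continuousAt
  rcases le_total a b with hab | hba
  · refine monotoneOn_of_hasDerivWithinAt_nonneg (convex_Ici a) hcont.continuousOn
      (fun t _ => (hf t).hasDerivWithinAt) (fun t ht => ?_) Set.self_mem_Ici hab hab
    rw [interior_Ici] at ht
    exact nonneg_of_mul_nonneg_right (hf' t) (sub_pos.2 ht)
  · refine antitoneOn_of_hasDerivWithinAt_nonpos (convex_Iic a) hcont.continuousOn
      (fun t _ => (hf t).hasDerivWithinAt) (fun t ht => ?_) hba Set.self_mem_Iic hba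
    rw [interior_Iic] at ht
    exact nonpos_of_mul_nonneg_right (hf' t) (sub_neg.2 ht)

lemma re_cpow_one_div_two_pos {c : ℂ} (hc : c ∈ slitPlane) : 0 < (c ^ ((1 : ℂ) / 2)).re := by
  rw [one_div, cpow_inv_two_re, Real.sqrt_pos]
  rcases mem_slitPlane_iff.1 hc with hre | him
  · positivity
  · linarith [neg_abs_le c.re, abs_re_lt_norm.2 him]

lemma cpow_one_div_two_sq (c : ℂ) : (c ^ ((1 : ℂ) / 2)) ^ 2 = c := by
  rw [one_div, cpow_ofNat_inv_pow]

lemma one_add_sq_mem_slitPlane {z : ℂ} (hz : 0 < z.re) : 1 + z ^ 2 ∈ slitPlane := by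
  rw [mem_slitPlane_iff, add_re, add_im, sq, mul_re, mul_im]
  by_cases hy : z.im = 0
  · left; simp only [hy, one_re, mul_zero, sub_zero]; positivity
  · right; simpa [← two_mul, mul_comm] using ⟨hz.ne', hy⟩

lemma re_im_of_sq_eq_one_add_sq {w z : ℂ} (hw : w ^ 2 = 1 + z ^ 2) :
    w.re ^ 2 - w.im ^ 2 = 1 + z.re ^ 2 - z.im ^ 2 ∧ w.re * w.im = z.re * z.im := by
  have hre := congrArg re hw
  have him := congrArg im hw
  simp only [sq, mul_re, mul_im, add_re, add_im, one_re, one_im] at hre him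
  constructor <;> linarith

lemma im_mul_re_div_mul_I_nonneg {w z : ℂ} (hw : w ^ 2 = 1 + z ^ 2) (hu : 0 < w.re) :
    0 ≤ z.im * (w / z * I).re := by
  obtain ⟨hre, him⟩ := re_im_of_sq_eq_one_add_sq hw
  have hux : z.re ^ 2 ≤ w.re ^ 2 := by
    have : (w.re ^ 2 - z.re ^ 2) * (w.re ^ 2 + z.im ^ 2) = w.re ^ 2 := by
      linear_combination w.re ^ 2 * hre + (z.re * z.im + w.re * w.im) * him
    nlinarith [sq_nonneg z.im]
  have key : w.re * (z.im * (w.re * z.im - w.im * z.re)) = z.im ^ 2 * (w.re ^ 2 - z.re ^ 2) := by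
    linear_combination (-(z.re * z.im)) * him
  have : 0 ≤ z.im * (w.re * z.im - w.im * z.re) :=
    nonneg_of_mul_nonneg_right (key ▸ mul_nonneg (sq_nonneg _) (sub_nonneg.2 hux)) hu
  have h : (w / z * I).re = (w.re * z.im - w.im * z.re) / normSq z := by
    simp only [mul_re, I_re, I_im, mul_zero, mul_one, zero_sub, div_im]
    ring
  rw [h, ← mul_div_assoc]
  exact div_nonneg this (normSq_nonneg z)

lemma div_one_add_mem_slitPlane {w z : ℂ} (hw : w ^ 2 = 1 + z ^ 2) (hu : 0 < w.re) (hz : 0 < z.re) :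
    z / (1 + w) ∈ slitPlane := by
  have hyv : 0 ≤ z.im * w.im := by
    have : w.re * (z.im * w.im) = z.re * z.im ^ 2 := by
      linear_combination z.im * (re_im_of_sq_eq_one_add_sq hw).2
    exact nonneg_of_mul_nonneg_right (this ▸ by positivity) hu
  have h1w : 0 < normSq (1 + w) := normSq_pos.2 fun h => by
    have := congrArg re h
    simp only [add_re, one_re, zero_re] at this
    linarith
  refine mem_slitPlane_iff.2 (Or.inl ?_)
  rw [div_re, ← add_div]
  simp only [add_re, add_im, one_re, one_im, zero_add]
  positivity

lemma hasDerivAt_xi {z : ℂ} (hz : 0 < z.re) :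
    HasDerivAt xi ((1 + z ^ 2) ^ ((1 : ℂ) / 2) / z) z := by
  have hc := one_add_sq_mem_slitPlane hz
  set w := (1 + z ^ 2) ^ ((1 : ℂ) / 2) with hw_def
  have hw : w ^ 2 = 1 + z ^ 2 := cpow_one_div_two_sq _
  have hu : 0 < w.re := re_cpow_one_div_two_pos hc
  have hz0 : z ≠ 0 := fun h => by simp [h] at hz
  have hw0 : w ≠ 0 := fun h => by simp [h] at hu
  have h1w : 1 + w ≠ 0 := fun h => by
    have := congrArg re h
    simp only [add_re, one_re, zero_re] at this
    linarith
  have hsqrt : HasDerivAt (fun s => (1 + s ^ 2) ^ ((1 : ℂ) / 2))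
      ((1 : ℂ) / 2 * (1 + z ^ 2) ^ ((1 : ℂ) / 2 - 1) * (2 * z)) z := by
    simpa using (((hasDerivAt_id z).pow 2).const_add 1).cpow_const hc
  have hlog := ((hasDerivAt_id z).div (hsqrt.const_add 1) h1w).clog
    (div_one_add_mem_slitPlane hw hu hz)
  refine (hsqrt.add hlog).congr_deriv ?_
  simp only [id, Pi.div_apply]
  rw [cpow_sub _ _ (slitPlane_ne_zero hc), cpow_one, ← hw_def, ← hw]
  field_simp
  linear_combination (-w) * hw

lemma hasDerivAt_re_xi_vertical {x : ℝ} (hx : 0 < x) (t : ℝ) :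
    HasDerivAt (fun t : ℝ => (xi (x + t * I)).re)
      ((1 + (x + t * I) ^ 2) ^ ((1 : ℂ) / 2) / (x + t * I) * I).re t := by
  have hline : HasDerivAt (fun s : ℂ => x + s * I) I t := by
    simpa using ((hasDerivAt_id (t : ℂ)).mul_const I).const_add (x : ℂ)
  exact ((hasDerivAt_xi (by simpa using hx)).comp (t : ℂ) hline).real_of_complex

lemma xi_ofReal {x : ℝ} (hx : 0 ≤ x) :
    xi x = ↑(√(1 + x ^ 2) + Real.log (x / (1 + √(1 + x ^ 2)))) := by
  have hsqrt : (1 + (x : ℂ) ^ 2) ^ ((1 : ℂ) / 2) = ↑√(1 + x ^ 2) := by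
    rw [Real.sqrt_eq_rpow, ofReal_cpow (by positivity)]
    push_cast
    rfl
  rw [xi, hsqrt, ofReal_add, ofReal_log (by positivity)]
  push_cast
  rfl

theorem xi_re_ge_xi_of_re_general (z : ℂ) (hre : 0 < z.re) :
    Real.sqrt (1 + z.re ^ 2) + Real.log (z.re / (1 + Real.sqrt (1 + z.re ^ 2))) ≤ (xi z).re := by
  have hmin := le_of_hasDerivAt_of_sub_mul_nonneg (a := 0) (hasDerivAt_re_xi_vertical hre)
    (fun t => by
      simpa using im_mul_re_div_mul_I_nonneg (cpow_one_div_two_sq (1 + (z.re + t * I) ^ 2))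
        (re_cpow_one_div_two_pos (one_add_sq_mem_slitPlane (by simpa using hre))))
    z.im
  simpa [xi_ofReal hre.le, re_add_im] using hmin

/-- Lemma 2.3(i), complex case: for every `z ∈ ℂ` with `x := Re z > 0` and `|Im z| ≤ x`
(i.e. `|arg z| ≤ π/4`), one has `Re ξ(z) ≥ ξ(x)`. -/
theorem xi_re_ge_xi_of_re (z : ℂ) (hre : 0 < z.re) (him : |z.im| ≤ z.re) :
    Real.sqrt (1 + z.re ^ 2) + Real.log (z.re / (1 + Real.sqrt (1 + z.re ^ 2))) ≤ (xi z).re :=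
  xi_re_ge_xi_of_re_general z hre

end
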